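/- Let A : ℕ → ℚ[X] and B : ℕ → ℚ[X] be two Appell sequences and n ≥ 1. For x : ℚ define the 2n × 2n Sylvester matrix S(x) over ℚ as follows: for 0 ≤ r ≤ n−1 (the first n rows), the entry in row r and column c equals C(n, c−r) · (A (c−r)).eval x if 0 ≤ c−r ≤ n and 0 otherwise; for 0 ≤ r ≤ n−1 (the last n rows, indexed by row n+r), the entry in column c equals C(n, c−r) · (B (c−r)).eval x if 0 ≤ c−r ≤ n and 0 otherwise. Then the semi-resultant sRes_n(A,B)(x) := det S(x) is independent of x: for all x, det S(x) = det S(0). -/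

import Mathlib

/-!
The rows of `S x` are the shifted coefficient vectors of the forms
`F_x(t) = ∑ C(n,i) A_i(x) t^(n-i)` and `G_x(t) = ∑ C(n,i) B_i(x) t^(n-i)`, so `det S(x)` is the
resultant of `F_x` and `G_x` in formal degrees `n, n`. An Appell sequence satisfies
`A_n = ∑ C(n,i) A_i(0) X^(n-i)`: both sides have derivative `n` times the previous term and agree
at `0`. Applied to the Appell sequence `A_k(X + x)` this gives `F_x(t) = F_0(t + x)`, and the
resultant is invariant under a common translation of the variable.
-/

open Polynomial Finset Matrix

variable {R : Type*} [CommRing R]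

namespace Polynomial

lemma coeff_taylor_of_natDegree_le {f : R[X]} {n : ℕ} (hf : f.natDegree ≤ n) (r : R) :
    (taylor r f).coeff n = f.coeff n := by
  rcases hf.lt_or_eq with hlt | rfl
  · rw [coeff_eq_zero_of_natDegree_lt hlt,
      coeff_eq_zero_of_natDegree_lt (by rwa [natDegree_taylor])]
  · simpa only [leadingCoeff, natDegree_taylor] using leadingCoeff_taylor (r := r) (f := f)

/-- Padding the formal degrees multiplies the resultant by powers of top coefficients, which
`taylor` preserves; so Mathlib's `resultant_taylor` extends to any formal degrees. -/
lemma resultant_taylor_of_natDegree_le {f g : R[X]} {m n : ℕ} (hf : f.natDegree ≤ m)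
    (hg : g.natDegree ≤ n) (r : R) :
    resultant (taylor r f) (taylor r g) m n = resultant f g m n := by
  obtain ⟨k, rfl⟩ := Nat.exists_eq_add_of_le hf
  obtain ⟨l, rfl⟩ := Nat.exists_eq_add_of_le hg
  have hres := resultant_taylor f g r
  rw [natDegree_taylor, natDegree_taylor] at hres
  rw [resultant_add_left_deg _ _ _ _ _ (natDegree_taylor f r).le,
    resultant_add_right_deg _ _ _ _ _ (natDegree_taylor g r).le,
    resultant_add_left_deg _ _ _ _ _ le_rfl, resultant_add_right_deg _ _ _ _ _ le_rfl, hres,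
    coeff_taylor_of_natDegree_le le_rfl, coeff_taylor_of_natDegree_le hg]

lemma derivative_taylor (r : R) (p : R[X]) :
    derivative (taylor r p) = taylor r (derivative p) := by
  simp [taylor_apply, derivative_comp]

lemma eq_of_derivative_eq_of_eval_zero_eq [IsAddTorsionFree R] {p q : R[X]}
    (hd : derivative p = derivative q) (h0 : p.eval 0 = q.eval 0) : p = q := by
  have := eq_C_of_derivative_eq_zero (p := p - q) (by rw [derivative_sub, hd, sub_self])
  rwa [coeff_zero_eq_eval_zero, eval_sub, h0, sub_self, map_zero, sub_eq_zero] at this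

end Polynomial

def sylvesterDesc (f g : R[X]) (n : ℕ) : Matrix (Fin (2 * n)) (Fin (2 * n)) R :=
  .of fun r c =>
    if (r : ℕ) < n then
      (if (r : ℕ) ≤ c ∧ (c : ℕ) - r ≤ n then f.coeff (n - (c - r)) else 0)
    else
      (if (r : ℕ) - n ≤ c ∧ (c : ℕ) - (r - n) ≤ n then g.coeff (n - (c - (r - n))) else 0)

lemma sylvesterDesc_eq_submatrix (f g : R[X]) (n : ℕ) :
    sylvesterDesc f g n =
      (sylvester f g n n)ᵀ.submatrix ((finCongr (two_mul n)).trans Fin.revPerm)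
        ((finCongr (two_mul n)).trans Fin.revPerm) := by
  ext r c
  set e := (finCongr (two_mul n)).trans Fin.revPerm
  have he : ∀ i : Fin (2 * n), (e i : ℕ) = 2 * n - 1 - i := fun i => by
    simp [e, Fin.val_rev]
    omega
  have hr := r.isLt
  have hc := c.isLt
  simp only [sylvesterDesc, sylvester, of_apply, submatrix_apply, transpose_apply, Set.mem_Icc]
  rcases lt_or_ge (r : ℕ) n with h | h
  · obtain ⟨j, hj⟩ : ∃ j : Fin n, e r = Fin.natAdd n j :=
      ⟨⟨n - 1 - r, by omega⟩, Fin.ext (by simp [he]; omega)⟩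
    have hj' := congrArg Fin.val hj
    simp only [he, Fin.val_natAdd] at hj'
    rw [hj, Fin.addCases_right, if_pos h, he]
    split_ifs <;> first | rfl | omega | (congr 1; omega)
  · obtain ⟨j, hj⟩ : ∃ j : Fin n, e r = Fin.castAdd n j :=
      ⟨⟨2 * n - 1 - r, by omega⟩, Fin.ext (by simp [he])⟩
    have hj' := congrArg Fin.val hj
    simp only [he, Fin.val_castAdd] at hj'
    rw [hj, Fin.addCases_left, if_neg (by omega), he]
    split_ifs <;> first | rfl | omega | (congr 1; omega)

lemma det_sylvesterDesc (f g : R[X]) (n : ℕ) : (sylvesterDesc f g n).det = resultant f g n n := by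
  rw [sylvesterDesc_eq_submatrix, Matrix.det_submatrix_equiv_self, Matrix.det_transpose]
  rfl

noncomputable def binomialForm (a : ℕ → R) (n : ℕ) : R[X] :=
  ∑ k ∈ range (n + 1), C (n.choose k * a (n - k)) * X ^ k

lemma coeff_binomialForm (a : ℕ → R) (n k : ℕ) :
    (binomialForm a n).coeff k = n.choose k * a (n - k) := by
  simp only [binomialForm, finsetSum_coeff, coeff_C_mul_X_pow, sum_ite_eq, mem_range]
  split_ifs with hk
  · rfl
  · rw [Nat.choose_eq_zero_of_lt (by omega), Nat.cast_zero, zero_mul]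

lemma coeff_binomialForm_sub (a : ℕ → R) {n k : ℕ} (hk : k ≤ n) :
    (binomialForm a n).coeff (n - k) = n.choose k * a k := by
  rw [coeff_binomialForm, Nat.choose_symm hk, Nat.sub_sub_self hk]

lemma natDegree_binomialForm_le (a : ℕ → R) (n : ℕ) : (binomialForm a n).natDegree ≤ n :=
  natDegree_le_iff_coeff_eq_zero.2 fun k hk => by
    rw [coeff_binomialForm, Nat.choose_eq_zero_of_lt (by exact_mod_cast hk), Nat.cast_zero,
      zero_mul]

lemma derivative_binomialForm_succ (a : ℕ → R) (n : ℕ) :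
    derivative (binomialForm a (n + 1)) = (n + 1) • binomialForm a n := by
  ext k
  rw [coeff_derivative, coeff_smul, coeff_binomialForm, coeff_binomialForm, nsmul_eq_mul,
    Nat.add_sub_add_right]
  have hchoose : ((n + 1 : ℕ) : R) * n.choose k = (n + 1).choose (k + 1) * (k + 1) := by
    simpa using congrArg (Nat.cast : ℕ → R) (Nat.add_one_mul_choose_eq n k)
  linear_combination a (n - k) * hchoose.symm

lemma eval_zero_binomialForm (a : ℕ → R) (n : ℕ) : (binomialForm a n).eval 0 = a n := by
  rw [← coeff_zero_eq_eval_zero, coeff_binomialForm, Nat.choose_zero_right, Nat.cast_one,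
    one_mul, Nat.sub_zero]

structure IsAppell (A : ℕ → R[X]) : Prop where
  derivative_zero : derivative (A 0) = 0
  derivative_succ : ∀ k : ℕ, derivative (A (k + 1)) = (k + 1) • A k

namespace IsAppell

variable {A : ℕ → R[X]}

lemma taylor (hA : IsAppell A) (r : R) : IsAppell fun k => Polynomial.taylor r (A k) where
  derivative_zero := by rw [derivative_taylor, hA.derivative_zero, map_zero]
  derivative_succ k := by rw [derivative_taylor, hA.derivative_succ, map_nsmul]

lemma eq_binomialForm [IsAddTorsionFree R] (hA : IsAppell A) (n : ℕ) :
    A n = binomialForm (fun k => (A k).eval 0) n := by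
  induction n with
  | zero =>
    rw [eq_C_of_derivative_eq_zero hA.derivative_zero]
    simp [binomialForm, coeff_zero_eq_eval_zero]
  | succ n ih =>
    refine eq_of_derivative_eq_of_eval_zero_eq ?_ (by rw [eval_zero_binomialForm])
    rw [hA.derivative_succ, derivative_binomialForm_succ, ← ih]

lemma binomialForm_eval_eq_taylor [IsAddTorsionFree R] (hA : IsAppell A) (x : R) (n : ℕ) :
    binomialForm (fun k => (A k).eval x) n =
      Polynomial.taylor x (binomialForm (fun k => (A k).eval 0) n) := by
  have := (hA.taylor x).eq_binomialForm n
  simp only [taylor_eval, zero_add] at this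
  rw [← this, ← hA.eq_binomialForm]

end IsAppell

theorem semiresultant_constant_general
    (A B : ℕ → Polynomial ℚ)
    (hA0 : Polynomial.derivative (A 0) = 0)
    (hA : ∀ k : ℕ, Polynomial.derivative (A (k + 1)) = (k + 1) • A k)
    (hB0 : Polynomial.derivative (B 0) = 0)
    (hB : ∀ k : ℕ, Polynomial.derivative (B (k + 1)) = (k + 1) • B k)
    (n : ℕ)
    (S : ℚ → Matrix (Fin (2 * n)) (Fin (2 * n)) ℚ)
    (hS : ∀ (x : ℚ) (r c : Fin (2 * n)),
      S x r c =
        if (r : ℕ) < n then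
          (if (r : ℕ) ≤ (c : ℕ) ∧ (c : ℕ) - (r : ℕ) ≤ n then
            (n.choose ((c : ℕ) - (r : ℕ)) : ℚ) * (A ((c : ℕ) - (r : ℕ))).eval x
          else 0)
        else
          (if (r : ℕ) - n ≤ (c : ℕ) ∧ (c : ℕ) - ((r : ℕ) - n) ≤ n then
            (n.choose ((c : ℕ) - ((r : ℕ) - n)) : ℚ) *
              (B ((c : ℕ) - ((r : ℕ) - n))).eval x
          else 0)) :
    ∀ x : ℚ, (S x).det = (S 0).det := by
  have hS_eq : ∀ y, S y = sylvesterDesc (binomialForm (fun k => (A k).eval y) n)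
      (binomialForm (fun k => (B k).eval y) n) n := by
    intro y
    ext r c
    rw [hS]
    simp only [sylvesterDesc, of_apply]
    split_ifs <;> first | rfl | rw [coeff_binomialForm_sub _ (by omega)]
  intro x
  rw [hS_eq, hS_eq, det_sylvesterDesc, det_sylvesterDesc,
    IsAppell.binomialForm_eval_eq_taylor ⟨hA0, hA⟩ x,
    IsAppell.binomialForm_eval_eq_taylor ⟨hB0, hB⟩ x,
    resultant_taylor_of_natDegree_le (natDegree_binomialForm_le _ _)
      (natDegree_binomialForm_le _ _)]

/-- For two Appell sequences `A`, `B` and `n ≥ 1`, the determinant of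
the `2n × 2n` Sylvester matrix of the two binary forms with coefficient sequences
`(C(n,i) A_i(x))` and `(C(n,i) B_i(x))` (the semi-resultant `sRes_n(A,B)`) is
independent of `x`. -/
theorem semiresultant_constant
    (A B : ℕ → Polynomial ℚ)
    (hA0 : Polynomial.derivative (A 0) = 0)
    (hA : ∀ k : ℕ, Polynomial.derivative (A (k + 1)) = (k + 1) • A k)
    (hB0 : Polynomial.derivative (B 0) = 0)
    (hB : ∀ k : ℕ, Polynomial.derivative (B (k + 1)) = (k + 1) • B k)
    (n : ℕ) (hn : 1 ≤ n)
    (S : ℚ → Matrix (Fin (2 * n)) (Fin (2 * n)) ℚ)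
    (hS : ∀ (x : ℚ) (r c : Fin (2 * n)),
      S x r c =
        if (r : ℕ) < n then
          (if (r : ℕ) ≤ (c : ℕ) ∧ (c : ℕ) - (r : ℕ) ≤ n then
            (n.choose ((c : ℕ) - (r : ℕ)) : ℚ) * (A ((c : ℕ) - (r : ℕ))).eval x
          else 0)
        else
          (if (r : ℕ) - n ≤ (c : ℕ) ∧ (c : ℕ) - ((r : ℕ) - n) ≤ n then
            (n.choose ((c : ℕ) - ((r : ℕ) - n)) : ℚ) *
              (B ((c : ℕ) - ((r : ℕ) - n))).eval x
          else 0)) :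
    ∀ x : ℚ, (S x).det = (S 0).det :=
  semiresultant_constant_general A B hA0 hA hB0 hB n S hS
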